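/- Let k be a field. Suppose the Poincaré polynomial of (G, Re) is palindrome, and let m ∈ G be the unique element with ℓ(m) = d. Define a k-bilinear form B on the free k-module with basis G (finitely supported functions G →₀ k) by setting, on basis elements, B(g, h) = 1 if gh = m and ℓ(g) + ℓ(h) = d, and B(g, h) = 0 otherwise. Then B is nondegenerate: for every nonzero x there exists y with B(x, y) ≠ 0, and for every nonzero y there exists x with B(x, y) ≠ 0. (This is the nondegenerate associative bilinear form making the Hasse algebra H_G(Re) Frobenius.) -/

import Mathlib

/-!
Everything rests on the identity `ℓ(g) + ℓ(g⁻¹ m) = d` for all `g`. Subadditivity of `ℓ` gives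
`d = ℓ(m) ≤ ℓ(g) + ℓ(g⁻¹ m)`. Palindromicity means that `ℓ` and `d - ℓ` have fibres of the same
size, so `∑ ℓ = ∑ (d - ℓ)`; as `g ↦ g⁻¹ m` is a bijection, summing the inequality over `G` gives
`|G| d` on both sides, so each instance is an equality. Pairing `x` with the basis vector `g⁻¹ m`
then picks out the coefficient `x g`, and symmetrically on the other side.
-/

open Classical

/-- The length of `g ∈ G` with respect to a generating set `Re`:
the smallest `n` such that `g` is a product of `n` elements of `Re`. -/
noncomputable def wordLength {G : Type*} [Group G] (Re : Set G) (g : G) : ℕ :=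
  sInf {n : ℕ | ∃ l : List G, (∀ x ∈ l, x ∈ Re) ∧ l.length = n ∧ l.prod = g}

/-- The bilinear form on the free `k`-module on `G` defined on basis elements by
`B(g, h) = 1` if `g * h = m` and `ℓ(g) + ℓ(h) = d`, and `B(g, h) = 0` otherwise. -/

noncomputable def hasseForm {G : Type*} [Group G] (Re : Set G) (m : G) (d : ℕ)
    {k : Type*} [Field k] (x y : G →₀ k) : k :=
  x.sum fun g a => y.sum fun h b =>
    if g * h = m ∧ wordLength Re g + wordLength Re h = d then a * b else 0

section WordLength

variable {G : Type*} [Group G] [Finite G] {Re : Set G}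

theorem exists_list_length_eq_wordLength (hgen : Subgroup.closure Re = ⊤) (g : G) :
    ∃ l : List G, (∀ x ∈ l, x ∈ Re) ∧ l.length = wordLength Re g ∧ l.prod = g := by
  have hg : g ∈ Submonoid.closure Re := by
    rw [← Subgroup.closure_toSubmonoid_of_finite, hgen]
    trivial
  obtain ⟨l, hl, hprod⟩ := Submonoid.exists_list_of_mem_closure hg
  exact Nat.sInf_mem (s := {n | ∃ l : List G, (∀ x ∈ l, x ∈ Re) ∧ l.length = n ∧ l.prod = g})
    ⟨l.length, l, hl, rfl, hprod⟩

theorem wordLength_mul_le (hgen : Subgroup.closure Re = ⊤) (g h : G) :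
    wordLength Re (g * h) ≤ wordLength Re g + wordLength Re h := by
  obtain ⟨l₁, hl₁, hlen₁, hprod₁⟩ := exists_list_length_eq_wordLength hgen g
  obtain ⟨l₂, hl₂, hlen₂, hprod₂⟩ := exists_list_length_eq_wordLength hgen h
  refine Nat.sInf_le ⟨l₁ ++ l₂, ?_, by simp [hlen₁, hlen₂], by simp [hprod₁, hprod₂]⟩
  simpa only [List.mem_append, or_imp, forall_and] using ⟨hl₁, hl₂⟩

end WordLength

theorem sum_eq_sum_tsub_of_card_fiber_eq {α : Type*} [Fintype α] {f : α → ℕ} {d : ℕ}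
    (hf : ∀ a, f a ≤ d)
    (hpal : ∀ i ≤ d, Nat.card {a // f a = i} = Nat.card {a // f a = d - i}) :
    ∑ a, f a = ∑ a, (d - f a) := by
  have hfiber : ∀ c, Nonempty ({a // f a = c} ≃ {a // d - f a = c}) := by
    intro c
    by_cases hc : c ≤ d
    · refine Finite.card_eq.1 ?_
      calc Nat.card {a // f a = c} = Nat.card {a // f a = d - (d - c)} := by
            rw [Nat.sub_sub_self hc]
        _ = Nat.card {a // f a = d - c} := (hpal (d - c) (Nat.sub_le d c)).symm
        _ = Nat.card {a // d - f a = c} :=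
            Nat.card_congr (Equiv.subtypeEquivRight fun a => by have := hf a; omega)
    · exact ⟨Equiv.subtypeEquivRight fun a => by have := hf a; omega⟩
  have e : ∀ c, {a // f a = c} ≃ {a // d - f a = c} := fun c => (hfiber c).some
  calc ∑ a, f a = ∑ a, (d - f (Equiv.ofFiberEquiv e a)) :=
        Finset.sum_congr rfl fun a _ => (Equiv.ofFiberEquiv_map e a).symm
    _ = ∑ a, (d - f a) := Equiv.sum_comp _ (fun a => d - f a)

theorem add_apply_inv_mul_eq_of_sum_eq_sum_tsub {G : Type*} [Group G] [Fintype G] {ℓ : G → ℕ}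
    {d : ℕ} (hmul : ∀ g h, ℓ (g * h) ≤ ℓ g + ℓ h) (hub : ∀ g, ℓ g ≤ d)
    (hsum : ∑ g, ℓ g = ∑ g, (d - ℓ g)) {m : G} (hm : ℓ m = d) (g : G) :
    ℓ g + ℓ (g⁻¹ * m) = d := by
  have hge : ∀ g, d ≤ ℓ g + ℓ (g⁻¹ * m) := fun g => by
    simpa only [hm, mul_inv_cancel_left] using hmul g (g⁻¹ * m)
  have htotal : ∑ g : G, d = ∑ g, (ℓ g + ℓ (g⁻¹ * m)) :=
    calc ∑ g : G, d = ∑ g, (ℓ g + (d - ℓ g)) :=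
          Finset.sum_congr rfl fun g _ => (Nat.add_sub_of_le (hub g)).symm
      _ = ∑ g, ℓ g + ∑ g, ℓ ((Equiv.inv G).trans (Equiv.mulRight m) g) := by
          rw [Finset.sum_add_distrib, ← hsum, Equiv.sum_comp]
      _ = ∑ g, (ℓ g + ℓ (g⁻¹ * m)) := Finset.sum_add_distrib.symm
  exact ((Finset.sum_eq_sum_iff_of_le fun g _ => hge g).1 htotal g (Finset.mem_univ g)).symm

theorem wordLength_add_wordLength_inv_mul {G : Type*} [Group G] [Finite G] {Re : Set G}
    (hgen : Subgroup.closure Re = ⊤) {d : ℕ} (hub : ∀ g : G, wordLength Re g ≤ d)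
    (hpal : ∀ i ≤ d, Nat.card {g : G // wordLength Re g = i}
      = Nat.card {g : G // wordLength Re g = d - i})
    {m : G} (hm : wordLength Re m = d) (g : G) :
    wordLength Re g + wordLength Re (g⁻¹ * m) = d :=
  have := Fintype.ofFinite G
  add_apply_inv_mul_eq_of_sum_eq_sum_tsub (wordLength_mul_le hgen) hub
    (sum_eq_sum_tsub_of_card_fiber_eq hub hpal) hm g

section HasseForm

variable {G : Type*} [Group G] (Re : Set G) (m : G) (d : ℕ) {k : Type*} [Field k]

theorem hasseForm_single_left (g : G) (a : k) (y : G →₀ k) :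
    hasseForm Re m d (Finsupp.single g a) y =
      if wordLength Re g + wordLength Re (g⁻¹ * m) = d then a * y (g⁻¹ * m) else 0 := by
  rw [hasseForm, Finsupp.sum_single_index (by simp), Finsupp.sum_eq_single (g⁻¹ * m)]
  · simp
  · intro h _ hh
    rw [if_neg]
    rintro ⟨hgh, -⟩
    exact hh (eq_inv_mul_of_mul_eq hgh)
  · simp

theorem hasseForm_single_right (x : G →₀ k) (h : G) (b : k) :
    hasseForm Re m d x (Finsupp.single h b) =
      if wordLength Re (m * h⁻¹) + wordLength Re h = d then x (m * h⁻¹) * b else 0 := by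
  rw [hasseForm, Finsupp.sum_eq_single (m * h⁻¹)]
  · simp
  · intro g _ hg
    rw [Finsupp.sum_single_index (by simp), if_neg]
    rintro ⟨hgh, -⟩
    exact hg (eq_mul_inv_of_mul_eq hgh)
  · simp

end HasseForm

theorem hasseForm_nondegenerate_general
    {G : Type*} [Group G] [Finite G] (Re : Set G)
    (hgen : Subgroup.closure Re = ⊤)
    (d : ℕ) (hub : ∀ g : G, wordLength Re g ≤ d)
    (hpal : ∀ i ≤ d, Nat.card {g : G // wordLength Re g = i}
      = Nat.card {g : G // wordLength Re g = d - i})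
    (m : G) (hm : wordLength Re m = d)
    (k : Type*) [Field k] :
    (∀ x : G →₀ k, x ≠ 0 → ∃ y : G →₀ k, hasseForm Re m d x y ≠ 0) ∧
    (∀ y : G →₀ k, y ≠ 0 → ∃ x : G →₀ k, hasseForm Re m d x y ≠ 0) := by
  have key := wordLength_add_wordLength_inv_mul hgen hub hpal hm
  refine ⟨fun x hx => ?_, fun y hy => ?_⟩
  · obtain ⟨g, hg⟩ := Finsupp.ne_iff.1 hx
    refine ⟨Finsupp.single (g⁻¹ * m) 1, ?_⟩
    simpa [hasseForm_single_right, key g] using hg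
  · obtain ⟨h, hh⟩ := Finsupp.ne_iff.1 hy
    refine ⟨Finsupp.single (m * h⁻¹) 1, ?_⟩
    have key' : wordLength Re (m * h⁻¹) + wordLength Re h = d := by simpa using key (m * h⁻¹)
    simpa [hasseForm_single_left, key'] using hh

/-- If the Poincaré polynomial of `(G, Re)` is palindrome and `m` is the unique
element of maximal length `d`, then the bilinear form `B` is nondegenerate on
both sides. This is the form making the Hasse algebra `H_G(Re)` Frobenius. -/
theorem hasseForm_nondegenerate
    {G : Type*} [Group G] [Finite G] (Re : Set G)
    (hgen : Subgroup.closure Re = ⊤) (hne : (1 : G) ∉ Re)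
    (d : ℕ) (hub : ∀ g : G, wordLength Re g ≤ d) (hex : ∃ g : G, wordLength Re g = d)
    (hpal : ∀ i ≤ d, Nat.card {g : G // wordLength Re g = i}
      = Nat.card {g : G // wordLength Re g = d - i})
    (m : G) (hm : wordLength Re m = d)
    (hmu : ∀ g : G, wordLength Re g = d → g = m)
    (k : Type*) [Field k] :
    (∀ x : G →₀ k, x ≠ 0 → ∃ y : G →₀ k, hasseForm Re m d x y ≠ 0) ∧
    (∀ y : G →₀ k, y ≠ 0 → ∃ x : G →₀ k, hasseForm Re m d x y ≠ 0) :=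
  hasseForm_nondegenerate_general Re hgen d hub hpal m hm k
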